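/- With ũ = (v, p^D), i.e. ũ − u = (0, p^D − p), one has A_n(u)^-_Θ (ũ − u)·ψ = (p − p^D)χ/√(4θ² + ρ² v_n²) − β(p − p^D)φ_n for all ψ = (φ, χ), where β = λ_m²/(θ² + λ_m²); in particular A_n(u)^-_Θ(ũ−u) = 0 iff p = p^D. -/

import Mathlib

/-!
Write `S = Θ Aₙ Θ` and `S⁻ = R · diag(min(dᵢ, 0)) · Rᵀ`. Whatever orthogonal diagonalisation
`S = R · diag d · Rᵀ` is chosen, `S⁻` acts on an eigenvector of `S` with eigenvalue `μ` as
multiplication by `min(μ, 0)`. The roots `λₘ < 0 < λₚ` of `λ² = ρvₙλ + θ²` are eigenvalues of `S`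
with eigenvectors `(λ n, θ)`, and `Θ⁻¹(0, 0, p^D − p)` is a combination of these two. Only the
`λₘ`-component survives, which gives `A⁻_Θ(ũ − u) = (p − p^D)/√(4θ² + ρ²vₙ²) · (λₘ n, 1)`; finally
`β = −λₘ/√(4θ² + ρ²vₙ²)` by Vieta (`λₘλₚ = −θ²`).
-/

open Matrix

theorem Matrix.mulVec_conj_diagonal_apply_of_mulVec_eq_smul {ι K : Type*} [Fintype ι] [DecidableEq ι]
    [Field K] {R Q : Matrix ι ι K} {d : ι → K} (f : K → K) (hRQ : R * Q = 1) {w : ι → K} {μ : K}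
    (hw : (R * diagonal d * Q) *ᵥ w = μ • w) :
    (R * diagonal (fun i => f (d i)) * Q) *ᵥ w = f μ • w := by
  have hQR : Q * R = 1 := mul_eq_one_comm.mp hRQ
  have hdiag : diagonal d *ᵥ (Q *ᵥ w) = μ • (Q *ᵥ w) := by
    rw [← mulVec_smul, ← hw, mulVec_mulVec, mulVec_mulVec, ← Matrix.mul_assoc, ← Matrix.mul_assoc,
      hQR, Matrix.one_mul]
  have hfdiag : diagonal (fun i => f (d i)) *ᵥ (Q *ᵥ w) = f μ • (Q *ᵥ w) := by
    ext i
    have hi := congrFun hdiag i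
    simp only [mulVec_diagonal, Pi.smul_apply, smul_eq_mul] at hi ⊢
    rcases mul_eq_mul_right_iff.mp hi with h | h
    · rw [h]
    · simp [h]
  rw [← mulVec_mulVec, ← mulVec_mulVec, hfdiag, mulVec_smul, mulVec_mulVec, hRQ, one_mulVec]

theorem Matrix.inv_diagonal_of_ne_zero {ι K : Type*} [Fintype ι] [DecidableEq ι] [Field K]
    {v : ι → K} (hv : ∀ i, v i ≠ 0) : (diagonal v)⁻¹ = diagonal v⁻¹ := by
  apply inv_eq_left_inv
  rw [diagonal_mul_diagonal, ← diagonal_one]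
  congr 1
  ext i
  simp [hv i]

def scaledNormalFlux (a θ : ℝ) (n : Fin 2 → ℝ) : Matrix (Fin 3) (Fin 3) ℝ :=
  !![a, 0, θ * n 0; 0, a, θ * n 1; θ * n 0, θ * n 1, 0]

theorem diagonal_mul_mul_diagonal_eq_scaledNormalFlux (a θ : ℝ) (n : Fin 2 → ℝ) :
    diagonal ![1, 1, θ] * !![a, 0, n 0; 0, a, n 1; n 0, n 1, 0] * diagonal ![1, 1, θ] =
      scaledNormalFlux a θ n := by
  ext i j
  fin_cases i <;> fin_cases j <;> simp [scaledNormalFlux, mul_apply, Fin.sum_univ_three]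
  all_goals ring

theorem scaledNormalFlux_mulVec_eigenvector {a θ l : ℝ} {n : Fin 2 → ℝ}
    (hn : n 0 ^ 2 + n 1 ^ 2 = 1) (hl : l ^ 2 = a * l + θ ^ 2) :
    scaledNormalFlux a θ n *ᵥ ![l * n 0, l * n 1, θ] = l • ![l * n 0, l * n 1, θ] := by
  ext i
  fin_cases i <;> simp [scaledNormalFlux, mulVec, dotProduct, Fin.sum_univ_three]
  · linear_combination -n 0 * hl
  · linear_combination -n 1 * hl
  · linear_combination θ * l * hn

theorem scaledNormalFlux_negPart_mulVec_pressure {a θ lm lp : ℝ} {n : Fin 2 → ℝ} {R Q : Matrix (Fin 3) (Fin 3) ℝ}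
    {d : Fin 3 → ℝ} (hθ : θ ≠ 0) (hn : n 0 ^ 2 + n 1 ^ 2 = 1) (hRQ : R * Q = 1)
    (hdec : scaledNormalFlux a θ n = R * diagonal d * Q)
    (hlm : lm ^ 2 = a * lm + θ ^ 2) (hlp : lp ^ 2 = a * lp + θ ^ 2) (hlm_neg : lm < 0)
    (hlp_pos : 0 < lp) :
    (R * diagonal (fun i => min (d i) 0) * Q) *ᵥ ![0, 0, 1] =
      (-θ / (lp - lm)) • ![lm * n 0, lm * n 1, θ] := by
  have hgap : lp - lm ≠ 0 := by linarith
  have hvieta : lm * lp = -θ ^ 2 := by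
    have : (lp - lm) * (lp + lm - a) = 0 := by linear_combination hlp - hlm
    have hsum : lp + lm = a := by linarith [(mul_eq_zero.mp this).resolve_left hgap]
    linear_combination lm * hsum - hlm
  have eig := fun l (hl : l ^ 2 = a * l + θ ^ 2) =>
    Matrix.mulVec_conj_diagonal_apply_of_mulVec_eq_smul (fun x => min x 0) hRQ
      (hdec ▸ scaledNormalFlux_mulVec_eigenvector hn hl)
  have hcomb : lp • ![lm * n 0, lm * n 1, θ] - lm • ![lp * n 0, lp * n 1, θ] =
      (θ * (lp - lm)) • ![0, 0, 1] := by
    ext i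
    fin_cases i <;> simp <;> ring
  have he3 : (![0, 0, 1] : Fin 3 → ℝ) = (θ * (lp - lm))⁻¹ •
      (lp • ![lm * n 0, lm * n 1, θ] - lm • ![lp * n 0, lp * n 1, θ]) := by
    rw [hcomb, smul_smul, inv_mul_cancel₀ (mul_ne_zero hθ hgap), one_smul]
  rw [he3, mulVec_smul, mulVec_sub, mulVec_smul, mulVec_smul, eig lm hlm, eig lp hlp,
    min_eq_left hlm_neg.le, min_eq_right hlp_pos.le]
  ext i
  fin_cases i <;> simp <;> field_simp
  · linear_combination lm * n 0 * hvieta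
  · linear_combination lm * n 1 * hvieta
  · linear_combination hvieta

theorem scaledNormalFlux_thetaNegPart_mulVec_pressure {a θ lm lp : ℝ} {n : Fin 2 → ℝ}
    {R Q : Matrix (Fin 3) (Fin 3) ℝ} {d : Fin 3 → ℝ} (hθ : θ ≠ 0) (hn : n 0 ^ 2 + n 1 ^ 2 = 1)
    (hRQ : R * Q = 1) (hdec : scaledNormalFlux a θ n = R * diagonal d * Q)
    (hlm : lm ^ 2 = a * lm + θ ^ 2) (hlp : lp ^ 2 = a * lp + θ ^ 2) (hlm_neg : lm < 0)
    (hlp_pos : 0 < lp) (c : ℝ) :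
    ((diagonal ![1, 1, θ])⁻¹ * (R * diagonal (fun i => min (d i) 0) * Q) *
        (diagonal ![1, 1, θ])⁻¹) *ᵥ ![0, 0, c] =
      (-c / (lp - lm)) • ![lm * n 0, lm * n 1, 1] := by
  have hc : (diagonal ![1, 1, θ]⁻¹ : Matrix (Fin 3) (Fin 3) ℝ) *ᵥ ![0, 0, c] =
      (c / θ) • ![0, 0, 1] := by
    ext i; fin_cases i <;> simp [mulVec_diagonal, div_eq_inv_mul]
  have hw : (diagonal ![1, 1, θ]⁻¹ : Matrix (Fin 3) (Fin 3) ℝ) *ᵥ ![lm * n 0, lm * n 1, θ] =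
      ![lm * n 0, lm * n 1, 1] := by
    ext i; fin_cases i <;> simp [mulVec_diagonal, hθ]
  have hΘ : ∀ i, ![1, 1, θ] i ≠ 0 := by
    intro i; fin_cases i <;> simp [hθ]
  rw [inv_diagonal_of_ne_zero hΘ, ← mulVec_mulVec, ← mulVec_mulVec, hc, mulVec_smul,
    scaledNormalFlux_negPart_mulVec_pressure hθ hn hRQ hdec hlm hlp hlm_neg hlp_pos, mulVec_smul,
    mulVec_smul, hw, smul_smul]
  congr 1
  field_simp

theorem stmt_16_general (ρ θ : ℝ) (hθ : 0 < θ)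
    (n : Fin 2 → ℝ) (hn : n 0 ^ 2 + n 1 ^ 2 = 1)
    (p : ℝ) (vn : ℝ)
    (Th A : Matrix (Fin 3) (Fin 3) ℝ)
    (hTh : Th = Matrix.diagonal ![1, 1, θ])
    (hA : A = !![ρ * vn, 0, n 0; 0, ρ * vn, n 1; n 0, n 1, 0])
    (R : Matrix (Fin 3) (Fin 3) ℝ) (dv : Fin 3 → ℝ)
    (hR : R * Rᵀ = 1)
    (hdec : Th * A * Th = R * Matrix.diagonal dv * Rᵀ)
    (Mneg : Matrix (Fin 3) (Fin 3) ℝ)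
    (hMneg : Mneg = Th⁻¹ * (R * Matrix.diagonal (fun i => min (dv i) 0) * Rᵀ) * Th⁻¹)
    (pD : ℝ)
    (lm β : ℝ)
    (hlm : lm = (ρ * vn - Real.sqrt (4 * θ ^ 2 + ρ ^ 2 * vn ^ 2)) / 2)
    (hβ : β = lm ^ 2 / (θ ^ 2 + lm ^ 2)) :
    (∀ (φ : Fin 2 → ℝ) (χ : ℝ),
      (Mneg *ᵥ ![0, 0, pD - p]) ⬝ᵥ ![φ 0, φ 1, χ] =
        (p - pD) * χ / Real.sqrt (4 * θ ^ 2 + ρ ^ 2 * vn ^ 2)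
          - β * (p - pD) * (φ 0 * n 0 + φ 1 * n 1)) ∧
    (Mneg *ᵥ ![0, 0, pD - p] = 0 ↔ p = pD) := by
  set s := Real.sqrt (4 * θ ^ 2 + ρ ^ 2 * vn ^ 2)
  have hs_sq : s ^ 2 = 4 * θ ^ 2 + (ρ * vn) ^ 2 := by
    rw [Real.sq_sqrt (by positivity)]; ring
  have hs_gt : |ρ * vn| < s := abs_lt_of_sq_lt_sq (by nlinarith) (Real.sqrt_nonneg _)
  have hs_pos : 0 < s := by positivity
  obtain ⟨hlt, hgt⟩ := abs_lt.mp hs_gt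
  have hlm_neg : lm < 0 := by rw [hlm]; linarith
  have hlp_pos : 0 < (ρ * vn + s) / 2 := by linarith
  have hMneg_mulVec (c : ℝ) : Mneg *ᵥ ![0, 0, c] = (-c / s) • ![lm * n 0, lm * n 1, 1] := by
    rw [hTh, hA, diagonal_mul_mul_diagonal_eq_scaledNormalFlux] at hdec
    rw [hMneg, hTh, scaledNormalFlux_thetaNegPart_mulVec_pressure hθ.ne' hn hR hdec
      (by rw [hlm]; linear_combination (1 / 4 : ℝ) * hs_sq)
      (by linear_combination (1 / 4 : ℝ) * hs_sq) hlm_neg hlp_pos]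
    congr 2
    rw [hlm]; ring
  have hβ_eq : β = -lm / s := by
    have hden : θ ^ 2 + lm ^ 2 = -lm * s := by
      rw [hlm]; linear_combination (-1 / 4 : ℝ) * hs_sq
    rw [hβ, hden]
    field_simp [hlm_neg.ne]
  refine ⟨fun φ χ => ?_, ?_⟩
  · rw [hMneg_mulVec, hβ_eq]
    simp only [dotProduct, Fin.sum_univ_three, Pi.smul_apply, smul_eq_mul, cons_val_zero,
      cons_val_one, cons_val]
    field_simp
    ring
  · rw [hMneg_mulVec]
    constructor
    · intro h
      have h2 : -(pD - p) / s * 1 = 0 := congrFun h 2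
      field_simp at h2
      linarith
    · rintro rfl
      simp

/-- With `ũ = (v, p^D)`, i.e. `ũ − u = (0, p^D − p)`:
`Aₙ(u)⁻_Θ (ũ − u)·ψ = (p − p^D)χ/√(4θ² + ρ² vₙ²) − β(p − p^D)φₙ` with `β = λm²/(θ² + λm²)`;
in particular `Aₙ(u)⁻_Θ (ũ − u) = 0 ↔ p = p^D`. -/
theorem stmt_16 (ρ θ : ℝ) (hρ : 0 < ρ) (hθ : 0 < θ)
    (n : Fin 2 → ℝ) (hn : n 0 ^ 2 + n 1 ^ 2 = 1)
    (v : Fin 2 → ℝ) (p : ℝ) (vn : ℝ) (hvn : vn = v 0 * n 0 + v 1 * n 1)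
    (Th A : Matrix (Fin 3) (Fin 3) ℝ)
    (hTh : Th = Matrix.diagonal ![1, 1, θ])
    (hA : A = !![ρ * vn, 0, n 0; 0, ρ * vn, n 1; n 0, n 1, 0])
    (R : Matrix (Fin 3) (Fin 3) ℝ) (dv : Fin 3 → ℝ)
    (hR : R * Rᵀ = 1)
    (hdec : Th * A * Th = R * Matrix.diagonal dv * Rᵀ)
    (Mneg : Matrix (Fin 3) (Fin 3) ℝ)
    (hMneg : Mneg = Th⁻¹ * (R * Matrix.diagonal (fun i => min (dv i) 0) * Rᵀ) * Th⁻¹)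
    (pD : ℝ)
    (lm β : ℝ)
    (hlm : lm = (ρ * vn - Real.sqrt (4 * θ ^ 2 + ρ ^ 2 * vn ^ 2)) / 2)
    (hβ : β = lm ^ 2 / (θ ^ 2 + lm ^ 2)) :
    (∀ (φ : Fin 2 → ℝ) (χ : ℝ),
      (Mneg *ᵥ ![0, 0, pD - p]) ⬝ᵥ ![φ 0, φ 1, χ] =
        (p - pD) * χ / Real.sqrt (4 * θ ^ 2 + ρ ^ 2 * vn ^ 2)
          - β * (p - pD) * (φ 0 * n 0 + φ 1 * n 1)) ∧
    (Mneg *ᵥ ![0, 0, pD - p] = 0 ↔ p = pD) :=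
  stmt_16_general ρ θ hθ n hn p vn Th A hTh hA R dv hR hdec Mneg hMneg pD lm β hlm hβ
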